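/- arXiv:2506.10892 — 6 statements merged into one kernel-verified Lean document; each statement's English description precedes it below -/
import Mathlib

section
/- Fix an integer K ≥ 2, an index k : Fin K, and ᾱ ∈ [0,1); set σ̃ = √(1 − ᾱ²). Let μ_k = N(ᾱ e_k, σ̃² I_K) be the product Gaussian measure on ℝ^K with mean vector ᾱ e_k and coordinate variance σ̃². Then μ_k({w | ∀ j ≠ k, w j < w k}) = ∫_ℝ φ(z − ᾱ/σ̃) · Φ(z)^{K−1} dz. -/
open MeasureTheory ProbabilityTheory

/-- The standard normal density `φ(z) = exp(-z²/2)/√(2π)`. -/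
noncomputable def stdGaussianPDF (z : ℝ) : ℝ :=
  Real.exp (-z ^ 2 / 2) / Real.sqrt (2 * Real.pi)

/-- The standard normal cumulative distribution function `Φ(z) = ∫_{-∞}^z φ(u) du`. -/
noncomputable def stdGaussianCDF (z : ℝ) : ℝ :=
  ∫ u in Set.Iic z, stdGaussianPDF u

/-
Condition on the `k`-th coordinate `x ~ N(ᾱ, σ̃²)`: the other `K - 1` coordinates are independent
`N(0, σ̃²)`, so all of them lie below `x` with probability `Φ(x / σ̃) ^ (K - 1)`. Integrating this
against `N(ᾱ, σ̃²)` and rescaling `z = x / σ̃`, which turns `N(ᾱ, σ̃²)` into `N(ᾱ / σ̃, 1)` with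
density `φ(z - ᾱ / σ̃)`, gives the formula.
-/

open Real Set

lemma gaussianPDFReal_one (m z : ℝ) : gaussianPDFReal m 1 z = stdGaussianPDF (z - m) := by
  simp [gaussianPDFReal, stdGaussianPDF, div_eq_inv_mul]

lemma ofReal_stdGaussianCDF (t : ℝ) :
    ENNReal.ofReal (stdGaussianCDF t) = gaussianReal 0 1 (Iio t) := by
  simp_rw [gaussianReal_apply_eq_integral 0 one_ne_zero, gaussianPDFReal_one, sub_zero,
    stdGaussianCDF, integral_Iic_eq_integral_Iio]

lemma stdGaussianCDF_eq_cdf : stdGaussianCDF = cdf (gaussianReal 0 1) := by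
  funext t
  have := nullSingletonClass_gaussianReal (μ := 0) one_ne_zero
  rw [cdf_eq_real, measureReal_def, ← measure_congr Iio_ae_eq_Iic, ← ofReal_stdGaussianCDF,
    ENNReal.toReal_ofReal]
  exact setIntegral_nonneg measurableSet_Iic fun u _ => by
    simpa [gaussianPDFReal_one] using gaussianPDFReal_nonneg 0 1 u

lemma stdGaussianCDF_nonneg (t : ℝ) : 0 ≤ stdGaussianCDF t :=
  stdGaussianCDF_eq_cdf ▸ cdf_nonneg _ t

lemma stdGaussianCDF_le_one (t : ℝ) : stdGaussianCDF t ≤ 1 :=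
  stdGaussianCDF_eq_cdf ▸ cdf_le_one _ t

lemma measurable_stdGaussianCDF : Measurable stdGaussianCDF :=
  stdGaussianCDF_eq_cdf ▸ (monotone_cdf _).measurable

lemma integrable_stdGaussianCDF_pow (μ : Measure ℝ) [IsFiniteMeasure μ] (n : ℕ) :
    Integrable (fun z => stdGaussianCDF z ^ n) μ := by
  refine .of_bound (measurable_stdGaussianCDF.pow_const n).aestronglyMeasurable 1
    (ae_of_all _ fun z => ?_)
  rw [norm_of_nonneg (pow_nonneg (stdGaussianCDF_nonneg z) n)]
  exact pow_le_one₀ (stdGaussianCDF_nonneg z) (stdGaussianCDF_le_one z)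

section Standardize

variable {v : NNReal}

lemma gaussianReal_map_div_sqrt (m : ℝ) (hv : v ≠ 0) :
    (gaussianReal m v).map (· / √(v : ℝ)) = gaussianReal (m / √(v : ℝ)) 1 := by
  rw [gaussianReal_map_div_const]
  congr
  ext
  simp [Real.sq_sqrt v.coe_nonneg, hv]

lemma gaussianReal_Iio_eq (m c : ℝ) (hv : v ≠ 0) :
    gaussianReal m v (Iio c) = gaussianReal (m / √(v : ℝ)) 1 (Iio (c / √(v : ℝ))) := by
  have hσ : 0 < √(v : ℝ) := Real.sqrt_pos.2 (NNReal.coe_pos.2 (pos_iff_ne_zero.2 hv))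
  have hpre : (· / √(v : ℝ)) ⁻¹' Iio (c / √(v : ℝ)) = Iio c := by
    ext x; simp [div_lt_div_iff_of_pos_right hσ]
  rw [← gaussianReal_map_div_sqrt m hv, Measure.map_apply (by fun_prop) measurableSet_Iio, hpre]

lemma lintegral_comp_div_sqrt_gaussianReal (m : ℝ) (hv : v ≠ 0) {g : ℝ → ENNReal}
    (hg : Measurable g) :
    ∫⁻ x, g (x / √(v : ℝ)) ∂gaussianReal m v = ∫⁻ z, g z ∂gaussianReal (m / √(v : ℝ)) 1 := by
  rw [← gaussianReal_map_div_sqrt m hv, lintegral_map hg (by fun_prop)]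

end Standardize

lemma lintegral_ofReal_gaussianReal_one (m : ℝ) {f : ℝ → ℝ}
    (hfi : Integrable f (gaussianReal m 1)) (hf : 0 ≤ f) :
    ∫⁻ z, ENNReal.ofReal (f z) ∂gaussianReal m 1
      = ENNReal.ofReal (∫ z, stdGaussianPDF (z - m) * f z) := by
  rw [← ofReal_integral_eq_lintegral_ofReal hfi (ae_of_all _ hf),
    integral_gaussianReal_eq_integral_smul one_ne_zero]
  simp_rw [gaussianPDFReal_one, smul_eq_mul]

theorem measure_pi_forall_lt_eq_lintegral {n : ℕ} (μ : Fin (n + 1) → Measure ℝ)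
    [∀ i, SigmaFinite (μ i)] (k : Fin (n + 1)) :
    Measure.pi μ {w | ∀ j ≠ k, w j < w k}
      = ∫⁻ x, ∏ j : Fin n, μ (k.succAbove j) (Iio x) ∂μ k := by
  let e := MeasurableEquiv.piFinSuccAbove (fun _ => ℝ) k
  let T : Set (ℝ × (Fin n → ℝ)) := {p | ∀ j, p.2 j < p.1}
  have hT : MeasurableSet T := by
    simp only [T, ofPred_forall]
    exact .iInter fun j => measurableSet_lt (by fun_prop) measurable_fst
  have hpre : {w : Fin (n + 1) → ℝ | ∀ j ≠ k, w j < w k} = e ⁻¹' T := by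
    ext w
    simp only [mem_ofPred_eq, mem_preimage, e, T, MeasurableEquiv.piFinSuccAbove,
      MeasurableEquiv.coe_mk, Fin.insertNthEquiv, Equiv.coe_fn_symm_mk, Fin.removeNth]
    exact ⟨fun h j => h _ (Fin.succAbove_ne k j), fun h j hj => by
      obtain ⟨j', rfl⟩ := Fin.exists_succAbove_eq hj
      exact h j'⟩
  have hslice (x : ℝ) : Prod.mk x ⁻¹' T = univ.pi fun _ => Iio x := by
    ext y; simp [T]
  rw [hpre, ← Measure.map_apply e.measurable hT, (measurePreserving_piFinSuccAbove μ k).map_eq,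
    Measure.prod_apply hT]
  simp_rw [hslice, Measure.pi_pi]

theorem gaussian_argmax_at_mean_index_general (K : ℕ) (k : Fin K)
    (α : ℝ) (hα0 : 0 ≤ α) (hα1 : α < 1) :
    (Measure.pi fun j : Fin K =>
        gaussianReal (if j = k then α else 0) (Real.toNNReal (1 - α ^ 2)))
        {w | ∀ j ≠ k, w j < w k}
      = ENNReal.ofReal
          (∫ z : ℝ, stdGaussianPDF (z - α / Real.sqrt (1 - α ^ 2))
              * stdGaussianCDF z ^ (K - 1)) := by
  obtain ⟨n, rfl⟩ : ∃ n, K = n + 1 := ⟨K - 1, by have := k.pos; omega⟩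
  set v := Real.toNNReal (1 - α ^ 2)
  have hv : v ≠ 0 := by
    rw [ne_eq, Real.toNNReal_eq_zero, not_le]; nlinarith
  have hσ : √(v : ℝ) = √(1 - α ^ 2) := by
    rw [Real.coe_toNNReal _ (by nlinarith)]
  calc _ = ∫⁻ x, ∏ _j : Fin n, gaussianReal 0 v (Iio x) ∂gaussianReal α v := by
        rw [measure_pi_forall_lt_eq_lintegral]
        simp [Fin.succAbove_ne]
    _ = ∫⁻ x, ENNReal.ofReal (stdGaussianCDF (x / √(v : ℝ)) ^ n) ∂gaussianReal α v := by
        simp_rw [gaussianReal_Iio_eq 0 _ hv, zero_div, ← ofReal_stdGaussianCDF,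
          Finset.prod_const, Finset.card_univ, Fintype.card_fin,
          ENNReal.ofReal_pow (stdGaussianCDF_nonneg _)]
    _ = _ := by
        rw [lintegral_comp_div_sqrt_gaussianReal α hv (g := fun z => ENNReal.ofReal _)
            (measurable_stdGaussianCDF.pow_const n).ennreal_ofReal,
          lintegral_ofReal_gaussianReal_one _ (integrable_stdGaussianCDF_pow _ n)
            fun z => pow_nonneg (stdGaussianCDF_nonneg z) n, hσ, Nat.add_sub_cancel]

/-- For `K ≥ 2`, `k : Fin K` and `ᾱ ∈ [0,1)`, with `σ̃ = √(1-ᾱ²)`, the product Gaussian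
`N(ᾱ e_k, σ̃² I_K)` gives the event that coordinate `k` is the strict maximum the
probability `∫_ℝ φ(z - ᾱ/σ̃) Φ(z)^{K-1} dz`. -/
theorem gaussian_argmax_at_mean_index (K : ℕ) (hK : 2 ≤ K) (k : Fin K)
    (α : ℝ) (hα0 : 0 ≤ α) (hα1 : α < 1) :
    (Measure.pi fun j : Fin K =>
        gaussianReal (if j = k then α else 0) (Real.toNNReal (1 - α ^ 2)))
        {w | ∀ j ≠ k, w j < w k}
      = ENNReal.ofReal
          (∫ z : ℝ, stdGaussianPDF (z - α / Real.sqrt (1 - α ^ 2))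
              * stdGaussianCDF z ^ (K - 1)) :=
  gaussian_argmax_at_mean_index_general K k α hα0 hα1
end

section
/- (Rao–Blackwellized NELBO identity.) Fix an integer K ≥ 2, α ∈ (0, 1), indices m, i : Fin K, and a vector x_θ ∈ ℝ^K with strictly positive entries. Let x = e_m and z = e_i be one-hot vectors, and define x̄ = K·α·x + (1−α)·𝟙, x̄_θ = K·α·x_θ + (1−α)·𝟙, and κ = (1−α)/(K·α + 1 − α). Then ∑_{j : Fin K} (x̄_j / x̄_i) · log( (x̄_θ)_i · x̄_j / ((x̄_θ)_j · x̄_i) ) = ( κ·[i = m] + [i ≠ m] ) · ∑_{j : Fin K} log( (x̄_θ)_i / (x̄_θ)_j ) + (K·α/(1−α)) · [i ≠ m] · log( (x̄_θ)_i / (x̄_θ)_m ) + ( (K−1)·κ·[i = m] − (1/κ)·[i ≠ m] ) · log κ, where [P] denotes 1 if P holds and 0 otherwise. Consequently the NELBO integrand f of Eq. (6) equals the Rao–Blackwellized integrand f_DUO of Eq. (16). -/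
/-!
Split `log (x̄θ_i x̄_j / (x̄θ_j x̄_i))` into `log (x̄θ_i / x̄θ_j) + log (x̄_j / x̄_i)`. Since `x̄` takes
only two values, `Kα + 1 - α` at `m` and `1 - α` elsewhere, the weights `x̄_j / x̄_i` are constant
off `j = m`: they are `1` and `κ` when `i = m`, and `1/κ` and `1` when `i ≠ m`. Each of the two
resulting sums is therefore a constant multiple of a full sum plus a correction at `j = m`.
-/

open Finset Real

namespace RaoBlackwell

variable {ι : Type*} [Fintype ι]

theorem sum_ratio_mul_log_ratio {x y : ι → ℝ} (hx : ∀ j, x j ≠ 0) (hy : ∀ j, y j ≠ 0) (i : ι) :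
    ∑ j, (x j / x i) * log (y i * x j / (y j * x i))
      = ∑ j, (x j / x i) * log (y i / y j) + ∑ j, (x j / x i) * log (x j / x i) := by
  rw [← sum_add_distrib]
  refine sum_congr rfl fun j _ => ?_
  rw [mul_div_mul_comm, log_mul (div_ne_zero (hy i) (hy j)) (div_ne_zero (hx j) (hx i)), mul_add]

variable [DecidableEq ι]

theorem sum_ite_mul (m : ι) (c₀ c₁ : ℝ) (f : ι → ℝ) :
    ∑ j, (if j = m then c₁ else c₀) * f j = c₀ * ∑ j, f j + (c₁ - c₀) * f m := by
  have hsplit : ∀ j, (if j = m then c₁ else c₀) * f j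
      = c₀ * f j + if j = m then (c₁ - c₀) * f m else 0 := by
    intro j
    split_ifs with hj
    · subst hj; ring
    · ring
  simp only [hsplit, sum_add_distrib, ← mul_sum, sum_ite_eq', mem_univ, if_true]

theorem sum_ite_const (m : ι) (c₀ c₁ : ℝ) :
    ∑ j, (if j = m then c₁ else c₀) = (Fintype.card ι - 1) * c₀ + c₁ := by
  have h := sum_ite_mul m c₀ c₁ fun _ => 1
  simp only [mul_one, sum_const, card_univ, nsmul_eq_mul] at h
  linarith

theorem sum_ite_mul_log_ite (m : ι) (c₀ c₁ : ℝ) :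
    ∑ j, (if j = m then c₁ else c₀) * log (if j = m then c₁ else c₀)
      = (Fintype.card ι - 1) * (c₀ * log c₀) + c₁ * log c₁ := by
  rw [← sum_ite_const m]
  exact sum_congr rfl fun j _ => by split_ifs <;> rfl

theorem sum_ratio_mul_log_ratio_of_eq {a b : ℝ} (ha : a ≠ 0) (hb : b ≠ 0) {y : ι → ℝ}
    (hy : ∀ j, y j ≠ 0) (m : ι) (x : ι → ℝ) (hx : x = fun j => if j = m then a else b) :
    ∑ j, (x j / x m) * log (y m * x j / (y j * x m))
      = b / a * ∑ j, log (y m / y j) + (Fintype.card ι - 1) * (b / a * log (b / a)) := by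
  have hx0 : ∀ j, x j ≠ 0 := fun j => by rw [hx]; dsimp only; split_ifs <;> assumption
  have hw : ∀ j, x j / x m = if j = m then 1 else b / a := fun j => by
    rw [hx]; dsimp only; split_ifs <;> simp_all
  rw [sum_ratio_mul_log_ratio hx0 hy]
  simp only [hw]
  rw [sum_ite_mul_log_ite, sum_ite_mul, div_self (hy m), log_one]
  ring

theorem sum_ratio_mul_log_ratio_of_ne {a b : ℝ} (ha : a ≠ 0) (hb : b ≠ 0) {y : ι → ℝ}
    (hy : ∀ j, y j ≠ 0) {m i : ι} (hi : i ≠ m) (x : ι → ℝ)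
    (hx : x = fun j => if j = m then a else b) :
    ∑ j, (x j / x i) * log (y i * x j / (y j * x i))
      = ∑ j, log (y i / y j) + (a / b - 1) * log (y i / y m) + a / b * log (a / b) := by
  have hx0 : ∀ j, x j ≠ 0 := fun j => by rw [hx]; dsimp only; split_ifs <;> assumption
  have hw : ∀ j, x j / x i = if j = m then a / b else 1 := fun j => by
    rw [hx]; dsimp only; split_ifs <;> simp_all
  rw [sum_ratio_mul_log_ratio hx0 hy]
  simp only [hw]
  rw [sum_ite_mul_log_ite, sum_ite_mul, log_one]
  ring

end RaoBlackwell

theorem rao_blackwellized_nelbo_identity_general (K : ℕ)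
    (α : ℝ) (hα0 : 0 < α) (hα1 : α < 1) (m i : Fin K)
    (xθ : Fin K → ℝ) (hxθ : ∀ j, 0 < xθ j)
    (xbar xbarθ : Fin K → ℝ) (κ : ℝ)
    (hxbar : xbar = fun j => (K : ℝ) * α * (if j = m then 1 else 0) + (1 - α))
    (hxbarθ : xbarθ = fun j => (K : ℝ) * α * xθ j + (1 - α))
    (hκ : κ = (1 - α) / ((K : ℝ) * α + 1 - α)) :
    ∑ j, (xbar j / xbar i) * Real.log ((xbarθ i * xbar j) / (xbarθ j * xbar i))
      = (κ * (if i = m then 1 else 0) + (if i = m then 0 else 1))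
            * ∑ j, Real.log (xbarθ i / xbarθ j)
        + ((K : ℝ) * α / (1 - α)) * (if i = m then 0 else 1)
            * Real.log (xbarθ i / xbarθ m)
        + (((K : ℝ) - 1) * κ * (if i = m then 1 else 0)
            - (1 / κ) * (if i = m then 0 else 1)) * Real.log κ := by
  have hb : 0 < 1 - α := by linarith
  have ha : 0 < (K : ℝ) * α + (1 - α) := by positivity
  have hx : xbar = fun j => if j = m then (K : ℝ) * α + (1 - α) else 1 - α := by
    rw [hxbar]; ext j; split_ifs <;> ring
  have hy : ∀ j, xbarθ j ≠ 0 := fun j => by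
    have := hxθ j
    rw [hxbarθ]; positivity
  have hκ' : κ = (1 - α) / ((K : ℝ) * α + (1 - α)) := by rw [hκ, add_sub_assoc]
  rcases eq_or_ne i m with rfl | hi
  · rw [RaoBlackwell.sum_ratio_mul_log_ratio_of_eq ha.ne' hb.ne' hy i xbar hx, Fintype.card_fin,
      ← hκ']
    simp only [if_true]
    ring
  · have hratio : ((K : ℝ) * α + (1 - α)) / (1 - α) = 1 / κ := by rw [hκ', one_div_div]
    have hcoef : (K : ℝ) * α / (1 - α) = 1 / κ - 1 := by
      rw [← hratio, add_div, div_self hb.ne', add_sub_cancel_right]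
    rw [RaoBlackwell.sum_ratio_mul_log_ratio_of_ne ha.ne' hb.ne' hy hi xbar hx, hcoef, hratio,
      one_div, log_inv]
    simp only [if_neg hi]
    ring

/-- **Rao–Blackwellized NELBO identity.**  For `K ≥ 2`, `α ∈ (0,1)`, indices `m i`, and a
strictly positive vector `x_θ`, with `x̄ = Kα e_m + (1-α)𝟙`, `x̄_θ = Kα x_θ + (1-α)𝟙`
and `κ = (1-α)/(Kα + 1 - α)`, the cross-entropy-like sum
`∑ j (x̄_j/x̄_i) log(x̄θ_i x̄_j / (x̄θ_j x̄_i))` equals its Rao–Blackwellized form. -/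
theorem rao_blackwellized_nelbo_identity (K : ℕ) (hK : 2 ≤ K)
    (α : ℝ) (hα0 : 0 < α) (hα1 : α < 1) (m i : Fin K)
    (xθ : Fin K → ℝ) (hxθ : ∀ j, 0 < xθ j)
    (xbar xbarθ : Fin K → ℝ) (κ : ℝ)
    (hxbar : xbar = fun j => (K : ℝ) * α * (if j = m then 1 else 0) + (1 - α))
    (hxbarθ : xbarθ = fun j => (K : ℝ) * α * xθ j + (1 - α))
    (hκ : κ = (1 - α) / ((K : ℝ) * α + 1 - α)) :
    ∑ j, (xbar j / xbar i) * Real.log ((xbarθ i * xbar j) / (xbarθ j * xbar i))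
      = (κ * (if i = m then 1 else 0) + (if i = m then 0 else 1))
            * ∑ j, Real.log (xbarθ i / xbarθ j)
        + ((K : ℝ) * α / (1 - α)) * (if i = m then 0 else 1)
            * Real.log (xbarθ i / xbarθ m)
        + (((K : ℝ) - 1) * κ * (if i = m then 1 else 0)
            - (1 / κ) * (if i = m then 0 else 1)) * Real.log κ :=
  rao_blackwellized_nelbo_identity_general K α hα0 hα1 m i xθ hxθ xbar xbarθ κ hxbar hxbarθ hκ
end

section
/- Fix an integer K ≥ 2, a mean vector μ ∈ ℝ^K, σ > 0, and two indices i, j : Fin K. Let ν = N(μ, σ² I_K) be the product Gaussian measure on ℝ^K with mean vector μ and coordinate variance σ². Then ν({w | ∀ l ≠ i, w l < w i}) = ν({w | ∀ l ≠ j, w l < w j}) if and only if μ_i = μ_j; i.e., the probabilities that the maximum is attained at index i and at index j coincide exactly when the corresponding means coincide. -/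
open MeasureTheory ProbabilityTheory
open scoped NNReal

/-! Swapping the coordinates `i` and `j` exchanges the events "the maximum is at `i`" and
"the maximum is at `j`", and turns the mean vector `μ` into `μ ∘ swap i j = μ + d`, where
`d i = μ j - μ i`, `d j = μ i - μ j` and `d` vanishes elsewhere. If `μ i < μ j`, the preimage of
the event at `i` under translation by `d` contains that event together with a nonempty open set
on which `w i < w j`. Since a nondegenerate Gaussian charges every nonempty open set, the
probability of the maximum being at `j` is strictly larger than at `i`. -/

section StrictArgmax

variable {ι : Type*}

def strictArgmaxSet (i : ι) : Set (ι → ℝ) := {w | ∀ l ≠ i, w l < w i}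

lemma measurableSet_strictArgmaxSet [Countable ι] (i : ι) :
    MeasurableSet (strictArgmaxSet i) := by
  simp only [strictArgmaxSet, Set.ofPred_forall]
  exact .iInter fun l => .iInter fun _ =>
    measurableSet_lt (measurable_pi_apply l) (measurable_pi_apply i)

lemma isOpen_strictArgmaxSet [Finite ι] (i : ι) : IsOpen (strictArgmaxSet i) := by
  simp only [strictArgmaxSet, Set.ofPred_forall]
  exact isOpen_iInter_of_finite fun l => isOpen_iInter_of_finite fun _ =>
    isOpen_lt (continuous_apply l) (continuous_apply i)

lemma pi_comp_equiv_strictArgmaxSet [Fintype ι] (ν : ι → Measure ℝ) [∀ l, SigmaFinite (ν l)]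
    (e : ι ≃ ι) (i : ι) :
    Measure.pi (fun l => ν (e l)) (strictArgmaxSet i) = Measure.pi ν (strictArgmaxSet (e i)) := by
  rw [← (measurePreserving_piCongrLeft ν e).measure_preimage
    (measurableSet_strictArgmaxSet _).nullMeasurableSet]
  congr 1
  ext w
  simp only [strictArgmaxSet, Set.mem_preimage, Set.mem_ofPred_eq]
  conv_rhs => rw [← e.forall_congr_right]
  simp [MeasurableEquiv.piCongrLeft_apply_apply, e.injective.eq_iff]

lemma measure_strictArgmaxSet_lt_preimage_add [Finite ι] (ν : Measure (ι → ℝ))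
    [IsFiniteMeasure ν] [Measure.IsOpenPosMeasure ν] {i j : ι} {d : ι → ℝ} (hd : ∀ l, d l ≤ d i)
    (hdj : d j < d i) :
    ν (strictArgmaxSet i) < ν ((· + d) ⁻¹' strictArgmaxSet i) := by
  have hji : j ≠ i := fun h => hdj.ne (h ▸ rfl)
  set U := (· + d) ⁻¹' strictArgmaxSet i ∩ {w | w i < w j}
  have hsub : strictArgmaxSet i ⊆ (· + d) ⁻¹' strictArgmaxSet i := fun w hw l hl => by
    simp only [Pi.add_apply]
    linarith [hw l hl, hd l]
  have hdisj : Disjoint (strictArgmaxSet i) U :=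
    Set.disjoint_left.2 fun w hw hwU => (hw j hji).not_gt hwU.2
  have hU_open : IsOpen U :=
    ((isOpen_strictArgmaxSet i).preimage (continuous_add_const d)).inter
      (isOpen_lt (continuous_apply i) (continuous_apply j))
  have hU_ne : U.Nonempty := by
    classical
    obtain ⟨t, ht0, htd⟩ : ∃ t, 0 < t ∧ t < d i - d j := ⟨(d i - d j) / 2, by linarith, by linarith⟩
    refine ⟨Pi.single i t - d, fun l hl => ?_, ?_⟩
    · simpa only [sub_add_cancel, Pi.single_eq_same, Pi.single_eq_of_ne hl] using ht0
    · change (Pi.single i t - d : ι → ℝ) i < (Pi.single i t - d : ι → ℝ) j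
      simp only [Pi.sub_apply, Pi.single_eq_same, Pi.single_eq_of_ne hji]
      linarith
  calc ν (strictArgmaxSet i) < ν (strictArgmaxSet i) + ν U :=
        ENNReal.lt_add_right (measure_ne_top _ _) (hU_open.measure_ne_zero ν hU_ne)
    _ = ν (strictArgmaxSet i ∪ U) := (measure_union hdisj hU_open.measurableSet).symm
    _ ≤ ν ((· + d) ⁻¹' strictArgmaxSet i) :=
        measure_mono (Set.union_subset hsub Set.inter_subset_left)

end StrictArgmax

lemma isOpenPosMeasure_gaussianReal (μ : ℝ) {v : ℝ≥0} (hv : v ≠ 0) :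
    Measure.IsOpenPosMeasure (gaussianReal μ v) :=
  (gaussianReal_absolutelyContinuous' μ hv).isOpenPosMeasure

lemma map_add_pi_gaussianReal {ι : Type*} [Fintype ι] (μ c : ι → ℝ) (v : ℝ≥0) :
    (Measure.pi fun l => gaussianReal (μ l) v).map (· + c)
      = Measure.pi fun l => gaussianReal (μ l + c l) v :=
  (measurePreserving_pi _ _ fun l =>
    ⟨measurable_add_const (c l), gaussianReal_map_add_const (c l)⟩).map_eq

lemma pi_gaussianReal_strictArgmaxSet_lt {ι : Type*} [Fintype ι] [DecidableEq ι] (μ : ι → ℝ)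
    {v : ℝ≥0} (hv : v ≠ 0) {i j : ι} (hμ : μ i < μ j) :
    Measure.pi (fun l => gaussianReal (μ l) v) (strictArgmaxSet i)
      < Measure.pi (fun l => gaussianReal (μ l) v) (strictArgmaxSet j) := by
  have : ∀ l, Measure.IsOpenPosMeasure (gaussianReal (μ l) v) := fun l =>
    isOpenPosMeasure_gaussianReal (μ l) hv
  set d : ι → ℝ := fun l => μ (Equiv.swap i j l) - μ l
  have hd : ∀ l, d l ≤ d i := by
    intro l
    rcases eq_or_ne l i with rfl | hli
    · rfl
    rcases eq_or_ne l j with rfl | hlj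
    · simp only [d, Equiv.swap_apply_left, Equiv.swap_apply_right]
      linarith
    simp only [d, Equiv.swap_apply_left, Equiv.swap_apply_of_ne_of_ne hli hlj]
    linarith
  have hdj : d j < d i := by
    simp only [d, Equiv.swap_apply_left, Equiv.swap_apply_right]
    linarith
  calc Measure.pi (fun l => gaussianReal (μ l) v) (strictArgmaxSet i)
      < Measure.pi (fun l => gaussianReal (μ l) v) ((· + d) ⁻¹' strictArgmaxSet i) :=
        measure_strictArgmaxSet_lt_preimage_add _ hd hdj
    _ = Measure.pi (fun l => gaussianReal (μ (Equiv.swap i j l)) v) (strictArgmaxSet i) := by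
        rw [← Measure.map_apply (measurable_add_const d) (measurableSet_strictArgmaxSet i),
          map_add_pi_gaussianReal]
        simp only [d, add_sub_cancel]
    _ = Measure.pi (fun l => gaussianReal (μ l) v) (strictArgmaxSet j) := by
        rw [pi_comp_equiv_strictArgmaxSet (fun l => gaussianReal (μ l) v), Equiv.swap_apply_left]

theorem gaussian_argmax_prob_eq_iff_mean_eq_general (K : ℕ) (μ : Fin K → ℝ)
    (σ : ℝ) (hσ : 0 < σ) (i j : Fin K) :
    (Measure.pi fun l : Fin K => gaussianReal (μ l) (Real.toNNReal (σ ^ 2)))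
          {w | ∀ l ≠ i, w l < w i}
        = (Measure.pi fun l : Fin K => gaussianReal (μ l) (Real.toNNReal (σ ^ 2)))
          {w | ∀ l ≠ j, w l < w j}
      ↔ μ i = μ j := by
  have hv : Real.toNNReal (σ ^ 2) ≠ 0 := (Real.toNNReal_pos.2 (by positivity)).ne'
  change Measure.pi _ (strictArgmaxSet i) = Measure.pi _ (strictArgmaxSet j) ↔ _
  constructor
  · intro h
    by_contra hne
    rcases lt_or_gt_of_ne hne with hlt | hgt
    exacts [(pi_gaussianReal_strictArgmaxSet_lt μ hv hlt).ne h,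
      (pi_gaussianReal_strictArgmaxSet_lt μ hv hgt).ne' h]
  · intro h
    rw [← Equiv.swap_apply_left i j, ← pi_comp_equiv_strictArgmaxSet]
    simp only [Equiv.apply_swap_eq_self h]

/-- For the product Gaussian `N(μ, σ² I_K)`, the probabilities that the maximum is
attained (strictly) at index `i` and at index `j` coincide exactly when `μ_i = μ_j`. -/
theorem gaussian_argmax_prob_eq_iff_mean_eq (K : ℕ) (hK : 2 ≤ K) (μ : Fin K → ℝ)
    (σ : ℝ) (hσ : 0 < σ) (i j : Fin K) :
    (Measure.pi fun l : Fin K => gaussianReal (μ l) (Real.toNNReal (σ ^ 2)))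
          {w | ∀ l ≠ i, w l < w i}
        = (Measure.pi fun l : Fin K => gaussianReal (μ l) (Real.toNNReal (σ ^ 2)))
          {w | ∀ l ≠ j, w l < w j}
      ↔ μ i = μ j :=
  gaussian_argmax_prob_eq_iff_mean_eq_general K μ σ hσ i j
end

section
/- Fix an integer K ≥ 2, an index k : Fin K, and a vector ε ∈ ℝ^K with pairwise distinct entries. For a ∈ (0, 1), let v(a) = a·e_k + √(1 − a²)·ε ∈ ℝ^K, and note v(a) has a unique maximizing index. Then for every a ∈ (0, 1), the maximizing index of v(a) is either k or the (unique) index j* maximizing ε over {j : j ≠ k}; in particular, along a deterministic discrete trajectory a ↦ argmax(a·e_k + √(1−a²)·ε) the token takes at most two values. -/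
/-- The one-hot vector `e_k ∈ ℝ^K`. -/
def oneHot {K : ℕ} (k : Fin K) : Fin K → ℝ := fun j => if j = k then 1 else 0

theorem oneHot_of_ne {K : ℕ} {k j : Fin K} (hj : j ≠ k) : oneHot k j = 0 := if_neg hj

theorem lt_of_mul_oneHot_add_mul_lt {K : ℕ} {k i j : Fin K} {ε : Fin K → ℝ} {a s : ℝ}
    (hs : 0 < s) (hi : i ≠ k) (hj : j ≠ k)
    (h : a * oneHot k j + s * ε j < a * oneHot k i + s * ε i) : ε j < ε i := by
  rw [oneHot_of_ne hi, oneHot_of_ne hj, mul_zero, zero_add, zero_add] at h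
  exact lt_of_mul_lt_mul_left h hs.le

theorem ddt_at_most_two_values_general (K : ℕ) (k : Fin K) (ε : Fin K → ℝ)
    (jstar : Fin K) (hjk : jstar ≠ k)
    (hjmax : ∀ j, j ≠ k → j ≠ jstar → ε j < ε jstar) :
    ∀ a : ℝ, 0 < a → a < 1 → ∀ i : Fin K,
      (∀ j ≠ i, a * oneHot k j + Real.sqrt (1 - a ^ 2) * ε j
          < a * oneHot k i + Real.sqrt (1 - a ^ 2) * ε i) →
      i = k ∨ i = jstar := by
  intro a ha0 ha1 i hmax
  by_contra! hi
  have hs : 0 < Real.sqrt (1 - a ^ 2) := Real.sqrt_pos.mpr (by nlinarith)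
  have hjstar_lt : ε jstar < ε i :=
    lt_of_mul_oneHot_add_mul_lt hs hi.1 hjk (hmax jstar (Ne.symm hi.2))
  exact (hjmax i hi.1 hi.2).not_gt hjstar_lt

/-- Along the deterministic discrete trajectory `a ↦ argmax(a e_k + √(1-a²) ε)` with
`ε` having pairwise distinct entries, the maximizing index is always `k` or the unique
index `j*` maximizing `ε` over `{j ≠ k}`; so the token takes at most two values. -/
theorem ddt_at_most_two_values (K : ℕ) (hK : 2 ≤ K) (k : Fin K) (ε : Fin K → ℝ)
    (hε : Function.Injective ε) (jstar : Fin K) (hjk : jstar ≠ k)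
    (hjmax : ∀ j, j ≠ k → j ≠ jstar → ε j < ε jstar) :
    ∀ a : ℝ, 0 < a → a < 1 → ∀ i : Fin K,
      (∀ j ≠ i, a * oneHot k j + Real.sqrt (1 - a ^ 2) * ε j
          < a * oneHot k i + Real.sqrt (1 - a ^ 2) * ε i) →
      i = k ∨ i = jstar :=
  ddt_at_most_two_values_general K k ε jstar hjk hjmax
end

section
/- Fix an integer K ≥ 2, an index k : Fin K, and a vector ε ∈ ℝ^K with pairwise distinct entries. For a ∈ (0, 1), let v(a) = a·e_k + √(1 − a²)·ε ∈ ℝ^K. If for some a₁ ∈ (0, 1) the maximum of v(a₁) is attained uniquely at index k (i.e., v(a₁)_j < v(a₁)_k for all j ≠ k), then for every a₂ ∈ (0, 1) with a₂ ≥ a₁ the maximum of v(a₂) is also attained uniquely at k. Equivalently, once a token flips away from k as a decreases along the deterministic discrete trajectory, it never flips back. -/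
/-! Coordinate `j ≠ k` of `a e_k + √(1 - a²) ε` stays below coordinate `k` exactly when
`√(1 - a²) (ε j - ε k) < a`. If `ε j ≤ ε k` this holds for every `a > 0`; otherwise its left
side decreases and its right side increases with `a`, so it persists as `a` grows. -/

theorem oneHot_combination_lt_iff {K : ℕ} {k j : Fin K} (hj : j ≠ k) (ε : Fin K → ℝ)
    (a c : ℝ) :
    a * oneHot k j + c * ε j < a * oneHot k k + c * ε k ↔ c * (ε j - ε k) < a := by
  simp only [oneHot, if_pos, if_neg hj, mul_zero, mul_one, zero_add, mul_sub]
  constructor <;> intro h <;> linarith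

theorem Real.sqrt_one_sub_sq_mul_lt_of_le {a₁ a₂ d : ℝ} (ha₂ : 0 < a₂) (h₁₂ : a₁ ≤ a₂)
    (h : √(1 - a₁ ^ 2) * d < a₁) : √(1 - a₂ ^ 2) * d < a₂ := by
  rcases le_or_gt d 0 with hd | hd
  · exact (mul_nonpos_of_nonneg_of_nonpos (Real.sqrt_nonneg _) hd).trans_lt ha₂
  · have ha₁ : 0 ≤ a₁ := (mul_nonneg (Real.sqrt_nonneg _) hd.le).trans h.le
    calc √(1 - a₂ ^ 2) * d
        ≤ √(1 - a₁ ^ 2) * d := by gcongr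
      _ < a₁ := h
      _ ≤ a₂ := h₁₂

theorem ddt_no_flip_back_general (K : ℕ) (k : Fin K) (ε : Fin K → ℝ)
    (a₁ a₂ : ℝ)
    (ha₂0 : 0 < a₂) (h12 : a₁ ≤ a₂)
    (hmax : ∀ j ≠ k, a₁ * oneHot k j + Real.sqrt (1 - a₁ ^ 2) * ε j
        < a₁ * oneHot k k + Real.sqrt (1 - a₁ ^ 2) * ε k) :
    ∀ j ≠ k, a₂ * oneHot k j + Real.sqrt (1 - a₂ ^ 2) * ε j
        < a₂ * oneHot k k + Real.sqrt (1 - a₂ ^ 2) * ε k := by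
  intro j hj
  have hmax_j := hmax j hj
  rw [oneHot_combination_lt_iff hj] at hmax_j ⊢
  exact Real.sqrt_one_sub_sq_mul_lt_of_le ha₂0 h12 hmax_j

/-- Along the deterministic discrete trajectory `a ↦ argmax(a e_k + √(1-a²) ε)`, if the
maximum is attained uniquely at `k` for some `a₁ ∈ (0,1)`, it is also attained uniquely
at `k` for every `a₂ ∈ (0,1)` with `a₂ ≥ a₁`: once a token flips away from `k` as `a`
decreases, it never flips back. -/
theorem ddt_no_flip_back (K : ℕ) (hK : 2 ≤ K) (k : Fin K) (ε : Fin K → ℝ)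
    (hε : Function.Injective ε) (a₁ a₂ : ℝ) (ha₁0 : 0 < a₁) (ha₁1 : a₁ < 1)
    (ha₂0 : 0 < a₂) (ha₂1 : a₂ < 1) (h12 : a₁ ≤ a₂)
    (hmax : ∀ j ≠ k, a₁ * oneHot k j + Real.sqrt (1 - a₁ ^ 2) * ε j
        < a₁ * oneHot k k + Real.sqrt (1 - a₁ ^ 2) * ε k) :
    ∀ j ≠ k, a₂ * oneHot k j + Real.sqrt (1 - a₂ ^ 2) * ε j
        < a₂ * oneHot k k + Real.sqrt (1 - a₂ ^ 2) * ε k :=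
  ddt_no_flip_back_general K k ε a₁ a₂ ha₂0 h12 hmax
end

section
/- (Discretized Gaussian transitions are not Uniform-state transitions.) Fix an integer K ≥ 3, a vector w ∈ ℝ^K with a unique maximizing index k, and a ∈ (0, 1). Suppose there exist indices i, j, both different from k, with w_i ≠ w_j. Let ν = N(a·w, (1 − a²) I_K) be the product Gaussian with mean a·w and coordinate variance 1 − a², and let A : ℝ^K → Fin K be the least-index argmax map. Then the pushforward A_* ν is not of the form Cat(α·e_k + (1−α)·𝟙/K) for any α ∈ [0,1]; i.e., (A_* ν)({i}) ≠ (A_* ν)({j}), so the argmax pushforward of the Gaussian transition kernel started at w differs from every Uniform-state discrete diffusion transition kernel started at A(w). -/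
/-!
Write `ν_m` for the product of Gaussians with means `m` and common variance `v > 0`, and let
`σ` be the transposition of `i` and `j`. Relabelling coordinates by `σ` carries `ν_m` to
`ν_{m ∘ σ}`; ties have probability zero, so it carries `{argmax = j}` to `{argmax = i}` up to a
null set, and `ν_m (argmax = j) = ν_{m ∘ σ} (argmax = i)`. On `{argmax = i}` almost surely
`x_j < x_i`, and there the density of `ν_{m ∘ σ}` is strictly below that of `ν_m` as soon as
`m_j < m_i`, since
`(x_i - m_j)² + (x_j - m_i)² - (x_i - m_i)² - (x_j - m_j)² = 2 (x_i - x_j) (m_i - m_j)`.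
Hence the argmax law charges `i` and `j` differently when `w_i ≠ w_j`, whereas a uniform-state
law gives the same mass to all indices other than `k`.
-/

open MeasureTheory ProbabilityTheory

/-- The least index attaining the maximum of `w : Fin K → ℝ`. -/
noncomputable def argmaxIdx {K : ℕ} [NeZero K] (w : Fin K → ℝ) : Fin K :=
  (Finset.univ.filter fun i => ∀ j, w j ≤ w i).min' (by
    obtain ⟨i, -, hi⟩ :=
      Finset.exists_max_image (Finset.univ : Finset (Fin K)) w Finset.univ_nonempty
    exact ⟨i, Finset.mem_filter.mpr ⟨Finset.mem_univ i, fun j => hi j (Finset.mem_univ j)⟩⟩)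

open scoped ENNReal NNReal

section Argmax

variable {K : ℕ} [NeZero K]

lemma argmaxIdx_eq_iff {x : Fin K → ℝ} {m : Fin K} :
    argmaxIdx x = m ↔ (∀ l, x l ≤ x m) ∧ ∀ m' < m, ∃ l, x m' < x l := by
  simp only [argmaxIdx, Finset.min'_eq_iff, Finset.mem_filter, Finset.mem_univ, true_and]
  refine and_congr_right fun _ => forall_congr' fun m' => ?_
  rw [← not_lt, imp_not_comm, not_forall]
  simp only [not_le]

lemma le_argmaxIdx (x : Fin K → ℝ) (l : Fin K) : x l ≤ x (argmaxIdx x) :=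
  (argmaxIdx_eq_iff.mp rfl).1 l

lemma argmaxIdx_eq_of_forall_lt {x : Fin K → ℝ} {m : Fin K} (h : ∀ l ≠ m, x l < x m) :
    argmaxIdx x = m :=
  argmaxIdx_eq_iff.mpr
    ⟨fun l => by rcases eq_or_ne l m with rfl | hl; exacts [le_rfl, (h l hl).le],
      fun m' hm' => ⟨m, h m' hm'.ne⟩⟩

lemma measurable_argmaxIdx : Measurable (argmaxIdx : (Fin K → ℝ) → Fin K) := by
  refine measurable_to_countable' fun m => ?_
  simp only [Set.preimage, Set.mem_singleton_iff, argmaxIdx_eq_iff]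
  measurability

lemma argmaxIdx_comp_equiv {x : Fin K → ℝ} (hx : Function.Injective x) (e : Equiv.Perm (Fin K)) :
    argmaxIdx (x ∘ e) = e.symm (argmaxIdx x) := by
  refine argmaxIdx_eq_of_forall_lt fun l hl => ?_
  simp only [Function.comp_apply, Equiv.apply_symm_apply]
  exact (le_argmaxIdx x (e l)).lt_of_ne (hx.ne (by simpa [Equiv.eq_symm_apply] using hl))

end Argmax

lemma volume_setOf_apply_eq_apply {ι : Type*} [Fintype ι] {p q : ι} (hpq : p ≠ q) :
    volume {x : ι → ℝ | x p = x q} = 0 := by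
  classical
  let f : (ι → ℝ) →ₗ[ℝ] ℝ := LinearMap.proj (R := ℝ) (φ := fun _ => ℝ) p - LinearMap.proj q
  have hker : {x : ι → ℝ | x p = x q} = LinearMap.ker f := by
    ext x; simp [f, sub_eq_zero]
  rw [hker]
  refine Measure.addHaar_submodule _ _ fun htop => ?_
  have : Pi.single p (1 : ℝ) ∈ LinearMap.ker f := htop ▸ Submodule.mem_top
  simp [f, hpq.symm] at this

lemma ae_injective_of_absolutelyContinuous {ι : Type*} [Fintype ι] {μ : Measure (ι → ℝ)}
    (hμ : μ ≪ volume) : ∀ᵐ x ∂μ, Function.Injective x := by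
  have hne : ∀ p q, ∀ᵐ x ∂μ, p ≠ q → x p ≠ x q := fun p q => by
    rcases eq_or_ne p q with rfl | hpq
    · exact .of_forall fun _ h => (h rfl).elim
    · exact (measure_eq_zero_iff_ae_notMem.mp (hμ (volume_setOf_apply_eq_apply hpq))).mono
        fun _ hx _ => hx
  filter_upwards [ae_all_iff.mpr fun p => ae_all_iff.mpr (hne p)] with x hx p q
  exact not_imp_not.mp (hx p q)

lemma lintegral_fin_nat_prod_eq_prod {n : ℕ} {X : Type*} [MeasurableSpace X]
    (μ : Fin n → Measure X) [∀ i, SigmaFinite (μ i)] {f : Fin n → X → ℝ≥0∞}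
    (hf : ∀ i, Measurable (f i)) :
    ∫⁻ x, ∏ i, f i (x i) ∂Measure.pi μ = ∏ i, ∫⁻ t, f i t ∂μ i := by
  induction n with
  | zero => simp
  | succ n ih =>
    calc ∫⁻ x, ∏ i, f i (x i) ∂Measure.pi μ
        = ∫⁻ y, f 0 y.1 * ∏ i : Fin n, f i.succ (y.2 i)
            ∂(μ 0).prod (Measure.pi fun i => μ i.succ) := by
          rw [← (measurePreserving_piFinSuccAbove μ 0).symm.lintegral_comp_emb
            (MeasurableEquiv.measurableEmbedding _)]
          simp_rw [MeasurableEquiv.piFinSuccAbove_symm_apply, Fin.insertNthEquiv,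
            Fin.prod_univ_succ, Fin.insertNth_zero, Equiv.coe_fn_mk, Fin.cons_succ,
            Fin.zero_succAbove, cast_eq, Fin.cons_zero]
      _ = ∏ i, ∫⁻ t, f i t ∂μ i := by
          have hrest : Measurable fun y : Fin n → X => ∏ i : Fin n, f i.succ (y i) :=
            Finset.measurable_prod _ fun i _ => (hf i.succ).comp (measurable_pi_apply i)
          rw [lintegral_prod_mul (hf 0).aemeasurable hrest.aemeasurable, ih _ fun i => hf i.succ,
            Fin.prod_univ_succ]

lemma pi_withDensity {n : ℕ} {X : Type*} [MeasurableSpace X]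
    (μ : Fin n → Measure X) [∀ i, SigmaFinite (μ i)] {f : Fin n → X → ℝ≥0∞}
    (hf : ∀ i, Measurable (f i)) [∀ i, SigmaFinite ((μ i).withDensity (f i))] :
    (Measure.pi fun i => (μ i).withDensity (f i) : Measure (Fin n → X))
      = (Measure.pi μ).withDensity fun x => ∏ i, f i (x i) := by
  refine Measure.pi_eq fun s hs => ?_
  rw [withDensity_apply _ (.univ_pi hs), Measure.restrict_pi_pi,
    lintegral_fin_nat_prod_eq_prod _ hf]
  exact Finset.prod_congr rfl fun i _ => (withDensity_apply _ (hs i)).symm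

section Gaussian

variable {K : ℕ} {v : ℝ≥0}

lemma pi_gaussianReal_eq_withDensity (m : Fin K → ℝ) (hv : v ≠ 0) :
    Measure.pi (fun l => gaussianReal (m l) v)
      = volume.withDensity fun x => ∏ l, gaussianPDF (m l) v (x l) := by
  have (l : Fin K) : SigmaFinite (volume.withDensity (gaussianPDF (m l) v)) := by
    rw [← gaussianReal_of_var_ne_zero _ hv]; infer_instance
  rw [volume_pi, ← pi_withDensity _ fun _ => measurable_gaussianPDF _ _]
  congr with l : 1
  exact gaussianReal_of_var_ne_zero _ hv

lemma gaussianPDFReal_mul_gaussianPDFReal_lt (hv : v ≠ 0) {m₁ m₂ x₁ x₂ : ℝ} (hm : m₂ < m₁)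
    (hx : x₂ < x₁) :
    gaussianPDFReal m₂ v x₁ * gaussianPDFReal m₁ v x₂
      < gaussianPDFReal m₁ v x₁ * gaussianPDFReal m₂ v x₂ := by
  have hv' : (0 : ℝ) < v := by positivity
  simp only [gaussianPDFReal]
  rw [mul_mul_mul_comm, mul_mul_mul_comm _ (Real.exp _), ← Real.exp_add, ← Real.exp_add]
  gcongr ?_ * Real.exp ?_
  rw [← add_div, ← add_div, div_lt_div_iff_of_pos_right (by positivity)]
  nlinarith [mul_pos (sub_pos.2 hx) (sub_pos.2 hm)]

lemma prod_gaussianPDF_swap_lt (hv : v ≠ 0) {m x : Fin K → ℝ} {i j : Fin K} (hij : i ≠ j)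
    (hm : m j < m i) (hx : x j < x i) :
    ∏ l, gaussianPDF (m (Equiv.swap i j l)) v (x l) < ∏ l, gaussianPDF (m l) v (x l) := by
  classical
  rw [← Finset.prod_mul_prod_compl {i, j}, ← Finset.prod_mul_prod_compl {i, j},
    Finset.prod_pair hij, Finset.prod_pair hij, Equiv.swap_apply_left, Equiv.swap_apply_right]
  have hrest : ∏ l ∈ {i, j}ᶜ, gaussianPDF (m (Equiv.swap i j l)) v (x l)
      = ∏ l ∈ {i, j}ᶜ, gaussianPDF (m l) v (x l) :=
    Finset.prod_congr rfl fun l hl => by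
      simp only [Finset.mem_compl, Finset.mem_insert, Finset.mem_singleton, not_or] at hl
      rw [Equiv.swap_apply_of_ne_of_ne hl.1 hl.2]
  rw [hrest]
  refine ENNReal.mul_lt_mul_left ?_ ?_ ?_
  · exact Finset.prod_ne_zero_iff.mpr fun l _ => (gaussianPDF_pos _ hv _).ne'
  · exact ENNReal.prod_ne_top fun l _ => ENNReal.ofReal_ne_top
  · simp only [gaussianPDF]
    rw [← ENNReal.ofReal_mul (gaussianPDFReal_nonneg _ _ _),
      ← ENNReal.ofReal_mul (gaussianPDFReal_nonneg _ _ _),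
      ENNReal.ofReal_lt_ofReal_iff
        (mul_pos (gaussianPDFReal_pos _ _ _ hv) (gaussianPDFReal_pos _ _ _ hv))]
    exact gaussianPDFReal_mul_gaussianPDFReal_lt hv hm hx

end Gaussian

section ArgmaxLaw

variable {K : ℕ} [NeZero K]

lemma volume_argmaxIdx_preimage_ne_zero (i : Fin K) :
    volume (argmaxIdx ⁻¹' {i} : Set (Fin K → ℝ)) ≠ 0 := by
  classical
  let O : Set (Fin K → ℝ) := ⋂ l ∈ ({i}ᶜ : Finset (Fin K)), {x | x l < x i}
  have hO : IsOpen O :=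
    isOpen_biInter_finset fun l _ => isOpen_lt (continuous_apply l) (continuous_apply i)
  have hOi : O ⊆ argmaxIdx ⁻¹' {i} := fun x hx =>
    argmaxIdx_eq_of_forall_lt fun l hl => by simpa using Set.mem_iInter₂.mp hx l (by simpa)
  refine fun h => (hO.measure_ne_zero volume ⟨Pi.single i 1, ?_⟩) (measure_mono_null hOi h)
  simp +contextual [O]

lemma pi_argmaxIdx_preimage_perm (μ : Fin K → Measure ℝ) [∀ l, SigmaFinite (μ l)]
    (e : Equiv.Perm (Fin K)) (hinj : ∀ᵐ x ∂Measure.pi (fun l => μ (e l)), Function.Injective x)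
    (m : Fin K) :
    Measure.pi μ (argmaxIdx ⁻¹' {e m}) = Measure.pi (fun l => μ (e l)) (argmaxIdx ⁻¹' {m}) := by
  rw [← (measurePreserving_piCongrLeft μ e).measure_preimage
    (measurable_argmaxIdx (measurableSet_singleton _)).nullMeasurableSet]
  refine measure_congr (hinj.mono fun x hx => propext ?_)
  show argmaxIdx (MeasurableEquiv.piCongrLeft (fun _ => ℝ) e x) = e m ↔ argmaxIdx x = m
  have hx' : (MeasurableEquiv.piCongrLeft (fun _ => ℝ) e) x = x ∘ e.symm := by
    ext l; simp [MeasurableEquiv.coe_piCongrLeft, Equiv.piCongrLeft_apply_eq_cast]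
  simp [hx', argmaxIdx_comp_equiv hx]

lemma pi_gaussianReal_swap_argmaxIdx_lt {v : ℝ≥0} (hv : v ≠ 0) {m : Fin K → ℝ} {i j : Fin K}
    (hij : i ≠ j) (hm : m j < m i) :
    Measure.pi (fun l => gaussianReal (m (Equiv.swap i j l)) v) (argmaxIdx ⁻¹' {i})
      < Measure.pi (fun l => gaussianReal (m l) v) (argmaxIdx ⁻¹' {i}) := by
  have hE := measurable_argmaxIdx (measurableSet_singleton i)
  have hfin := measure_ne_top (Measure.pi fun l => gaussianReal (m (Equiv.swap i j l)) v)
    (argmaxIdx ⁻¹' {i})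
  rw [pi_gaussianReal_eq_withDensity _ hv, withDensity_apply _ hE] at hfin ⊢
  rw [pi_gaussianReal_eq_withDensity _ hv, withDensity_apply _ hE]
  refine setLIntegral_strict_mono hE (volume_argmaxIdx_preimage_ne_zero i)
    (Finset.measurable_prod _ fun l _ => (measurable_gaussianPDF _ _).comp (measurable_pi_apply l))
    hfin ?_
  filter_upwards [ae_injective_of_absolutelyContinuous Measure.AbsolutelyContinuous.rfl]
    with x hx (hxi : argmaxIdx x = i)
  exact prod_gaussianPDF_swap_lt hv hij hm ((hxi ▸ le_argmaxIdx x j).lt_of_ne (hx.ne hij.symm))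

lemma pi_gaussianReal_argmaxIdx_lt {v : ℝ≥0} (hv : v ≠ 0) {m : Fin K → ℝ} {i j : Fin K}
    (hm : m j < m i) :
    Measure.pi (fun l => gaussianReal (m l) v) (argmaxIdx ⁻¹' {j})
      < Measure.pi (fun l => gaussianReal (m l) v) (argmaxIdx ⁻¹' {i}) := by
  have hij : i ≠ j := ne_of_apply_ne m hm.ne'
  have hinj : ∀ᵐ x ∂Measure.pi (fun l => gaussianReal (m (Equiv.swap i j l)) v),
      Function.Injective x := by
    rw [pi_gaussianReal_eq_withDensity _ hv]
    exact ae_injective_of_absolutelyContinuous (withDensity_absolutelyContinuous _ _)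
  calc Measure.pi (fun l => gaussianReal (m l) v) (argmaxIdx ⁻¹' {j})
      = Measure.pi (fun l => gaussianReal (m l) v) (argmaxIdx ⁻¹' {Equiv.swap i j i}) := by
        rw [Equiv.swap_apply_left]
    _ = Measure.pi (fun l => gaussianReal (m (Equiv.swap i j l)) v) (argmaxIdx ⁻¹' {i}) :=
        pi_argmaxIdx_preimage_perm (fun l => gaussianReal (m l) v) _ hinj i
    _ < Measure.pi (fun l => gaussianReal (m l) v) (argmaxIdx ⁻¹' {i}) :=
        pi_gaussianReal_swap_argmaxIdx_lt hv hij hm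

end ArgmaxLaw

theorem discretized_gaussian_kernel_not_uniform_state_general (K : ℕ) [NeZero K]
    (w : Fin K → ℝ) (k : Fin K)
    (a : ℝ) (ha0 : 0 < a) (ha1 : a < 1)
    (i j : Fin K) (hik : i ≠ k) (hjk : j ≠ k) (hij : w i ≠ w j) :
    (∀ α : ℝ, 0 ≤ α → α ≤ 1 →
        ∃ m : Fin K,
          (Measure.map argmaxIdx
              (Measure.pi fun l : Fin K =>
                gaussianReal (a * w l) (Real.toNNReal (1 - a ^ 2)))) {m}
            ≠ ENNReal.ofReal
                (α * (if m = k then 1 else 0) + (1 - α) / (K : ℝ)))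
      ∧ (Measure.map argmaxIdx
            (Measure.pi fun l : Fin K =>
              gaussianReal (a * w l) (Real.toNNReal (1 - a ^ 2)))) {i}
          ≠ (Measure.map argmaxIdx
              (Measure.pi fun l : Fin K =>
                gaussianReal (a * w l) (Real.toNNReal (1 - a ^ 2)))) {j} := by
  have hv : (1 - a ^ 2).toNNReal ≠ 0 := by
    rw [Ne, Real.toNNReal_eq_zero, not_le]
    nlinarith
  set ν := Measure.pi fun l : Fin K => gaussianReal (a * w l) (1 - a ^ 2).toNNReal
  have hmass (m : Fin K) :=
    Measure.map_apply (μ := ν) measurable_argmaxIdx (measurableSet_singleton m)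
  have hij_mass : ν.map argmaxIdx {i} ≠ ν.map argmaxIdx {j} := by
    rw [hmass i, hmass j]
    rcases hij.lt_or_gt with h | h
    · exact (pi_gaussianReal_argmaxIdx_lt hv (mul_lt_mul_of_pos_left h ha0)).ne
    · exact (pi_gaussianReal_argmaxIdx_lt hv (mul_lt_mul_of_pos_left h ha0)).ne'
  refine ⟨fun α _ _ => ?_, hij_mass⟩
  by_contra! h
  exact hij_mass (by rw [h i, h j, if_neg hik, if_neg hjk])

/-- **Discretized Gaussian transitions are not Uniform-state transitions.**  For `K ≥ 3`,
`w` with unique maximizing index `k`, `a ∈ (0,1)`, and indices `i, j ≠ k` with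
`w i ≠ w j`, the argmax pushforward of `N(a w, (1-a²) I_K)` assigns different masses to
`i` and to `j`; in particular it is not of the form `Cat(α e_k + (1-α) 𝟙/K)` for any
`α ∈ [0,1]`. -/
theorem discretized_gaussian_kernel_not_uniform_state (K : ℕ) (hK : 3 ≤ K) [NeZero K]
    (w : Fin K → ℝ) (k : Fin K) (hk : ∀ j ≠ k, w j < w k)
    (a : ℝ) (ha0 : 0 < a) (ha1 : a < 1)
    (i j : Fin K) (hik : i ≠ k) (hjk : j ≠ k) (hij : w i ≠ w j) :
    (∀ α : ℝ, 0 ≤ α → α ≤ 1 →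
        ∃ m : Fin K,
          (Measure.map argmaxIdx
              (Measure.pi fun l : Fin K =>
                gaussianReal (a * w l) (Real.toNNReal (1 - a ^ 2)))) {m}
            ≠ ENNReal.ofReal
                (α * (if m = k then 1 else 0) + (1 - α) / (K : ℝ)))
      ∧ (Measure.map argmaxIdx
            (Measure.pi fun l : Fin K =>
              gaussianReal (a * w l) (Real.toNNReal (1 - a ^ 2)))) {i}
          ≠ (Measure.map argmaxIdx
              (Measure.pi fun l : Fin K =>
                gaussianReal (a * w l) (Real.toNNReal (1 - a ^ 2)))) {j} :=
  discretized_gaussian_kernel_not_uniform_state_general K w k a ha0 ha1 i j hik hjk hij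
end
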